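/- arXiv:1101.2337 — 3 statements merged into one kernel-verified Lean document; each statement's English description precedes it below -/
import Mathlib

section
/- If p ∈ [0,1]^N is an ε-equilibrium in the one-step game Γ_v, then p is εξ_p-perfect, where ξ_p := max_n ξ_p^n with ξ_p^n := max(1/p^n, 1/(1−p^n)) if p^n ∈ (0,1) and ξ_p^n := 1 if p^n ∈ {0,1}. -/
open Finset

noncomputable section

/-- probability that exactly the coalition `S` quits under profile `p` -/
def rho {N : ℕ} (p : Fin N → ℝ) (S : Finset (Fin N)) : ℝ :=
  (∏ i ∈ S, p i) * ∏ j ∈ Sᶜ, (1 - p j)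

/-- expected payoff of player `n` in the one-step game `Γ_v` -/
def gamma {N : ℕ} (v : Fin N → ℝ) (r : Finset (Fin N) → Fin N → ℝ)
    (p : Fin N → ℝ) (n : Fin N) : ℝ :=
  rho p ∅ * v n + ∑ S ∈ univ.filter (fun S => S ≠ (∅ : Finset (Fin N))), rho p S * r S n

/-- `p` is an `ε`-equilibrium in the one-step game -/
def IsEquilibrium {N : ℕ} (v : Fin N → ℝ) (r : Finset (Fin N) → Fin N → ℝ)
    (ε : ℝ) (p : Fin N → ℝ) : Prop :=
  ∀ n : Fin N, ∀ q : ℝ, 0 ≤ q → q ≤ 1 →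
    gamma v r (Function.update p n q) n - ε ≤ gamma v r p n

/-- `p` is `ε`-perfect in the one-step game -/
def IsPerfect {N : ℕ} (v : Fin N → ℝ) (r : Finset (Fin N) → Fin N → ℝ)
    (ε : ℝ) (p : Fin N → ℝ) : Prop :=
  ∀ n : Fin N,
    (p n = 0 → gamma v r (Function.update p n 1) n - gamma v r (Function.update p n 0) n ≤ ε) ∧
    (0 < p n → p n < 1 →
      |gamma v r (Function.update p n 1) n - gamma v r (Function.update p n 0) n| ≤ ε) ∧
    (p n = 1 → -ε ≤ gamma v r (Function.update p n 1) n - gamma v r (Function.update p n 0) n)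

lemma rho_affine {N : ℕ} (p : Fin N → ℝ) (n : Fin N) (q : ℝ) (S : Finset (Fin N)) :
    rho (Function.update p n q) S
      = (1 - q) * rho (Function.update p n 0) S + q * rho (Function.update p n 1) S := by
  unfold rho
  by_cases h : n ∈ S
  · have hc : n ∉ Sᶜ := by simp [h]
    have hprod : ∀ t : ℝ, ∏ j ∈ Sᶜ, (1 - Function.update p n t j) = ∏ j ∈ Sᶜ, (1 - p j) := by
      intro t
      refine Finset.prod_congr rfl fun j hj => ?_
      rw [Function.update_of_ne (by rintro rfl; exact hc hj)]
    rw [Finset.prod_update_of_mem h, Finset.prod_update_of_mem h, Finset.prod_update_of_mem h,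
      hprod, hprod, hprod]
    ring
  · have hc : n ∈ Sᶜ := by simp [h]
    have hprodS : ∀ t : ℝ, ∏ i ∈ S, Function.update p n t i = ∏ i ∈ S, p i := by
      intro t
      refine Finset.prod_congr rfl fun j hj => ?_
      rw [Function.update_of_ne (by rintro rfl; exact h hj)]
    have hprodC : ∀ t : ℝ, ∏ j ∈ Sᶜ, (1 - Function.update p n t j)
        = (1 - t) * ∏ j ∈ Sᶜ.erase n, (1 - p j) := by
      intro t
      rw [← Finset.mul_prod_erase _ _ hc, Function.update_self]
      congr 1
      refine Finset.prod_congr rfl fun j hj => ?_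
      rw [Function.update_of_ne (Finset.ne_of_mem_erase hj)]
    rw [hprodS, hprodS, hprodS, hprodC, hprodC, hprodC]
    ring

lemma gamma_affine {N : ℕ} (v : Fin N → ℝ) (r : Finset (Fin N) → Fin N → ℝ)
    (p : Fin N → ℝ) (n : Fin N) (q : ℝ) :
    gamma v r (Function.update p n q) n
      = (1 - q) * gamma v r (Function.update p n 0) n
        + q * gamma v r (Function.update p n 1) n := by
  unfold gamma
  simp only [rho_affine p n q]
  rw [Finset.sum_congr rfl (fun S _ => (by ring :
    ((1 - q) * rho (Function.update p n 0) S + q * rho (Function.update p n 1) S) * r S n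
      = (1 - q) * (rho (Function.update p n 0) S * r S n)
        + q * (rho (Function.update p n 1) S * r S n))),
    Finset.sum_add_distrib, ← Finset.mul_sum, ← Finset.mul_sum]
  ring

theorem equilibrium_imp_perfect (N : ℕ) (hN : 0 < N) (v : Fin N → ℝ)
    (r : Finset (Fin N) → Fin N → ℝ) (ε : ℝ) (hε : 0 ≤ ε)
    (p : Fin N → ℝ) (hp : ∀ i, 0 ≤ p i ∧ p i ≤ 1)
    (heq : IsEquilibrium v r ε p) :
    IsPerfect v r
      (ε * Finset.univ.sup'
        (Finset.univ_nonempty_iff.mpr (Fin.pos_iff_nonempty.mp hN))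
        (fun n => if p n = 0 ∨ p n = 1 then (1 : ℝ) else max (1 / p n) (1 / (1 - p n))))
      p := by
  intro n
  set f : Fin N → ℝ :=
    fun n => if p n = 0 ∨ p n = 1 then (1 : ℝ) else max (1 / p n) (1 / (1 - p n)) with hf
  set ξ : ℝ := Finset.univ.sup'
    (Finset.univ_nonempty_iff.mpr (Fin.pos_iff_nonempty.mp hN)) f with hξ
  have hξn : f n ≤ ξ := Finset.le_sup' f (Finset.mem_univ n)
  set g0 := gamma v r (Function.update p n 0) n with hg0
  set g1 := gamma v r (Function.update p n 1) n with hg1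
  -- key inequality from the equilibrium: (q - p n) * (g1 - g0) ≤ ε for q ∈ [0,1]
  have key : ∀ q : ℝ, 0 ≤ q → q ≤ 1 → (q - p n) * (g1 - g0) ≤ ε := by
    intro q h0 h1
    have h := heq n q h0 h1
    have hgp : gamma v r p n = (1 - p n) * g0 + p n * g1 := by
      conv_lhs => rw [← Function.update_eq_self n p]
      rw [gamma_affine v r p n (p n)]
    have hgq : gamma v r (Function.update p n q) n = (1 - q) * g0 + q * g1 :=
      gamma_affine v r p n q
    rw [hgp, hgq] at h
    nlinarith [h]
  have key1 : (1 - p n) * (g1 - g0) ≤ ε := key 1 zero_le_one le_rfl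
  have key0 : - (p n * (g1 - g0)) ≤ ε := by
    have := key 0 le_rfl zero_le_one
    nlinarith [this]
  have hfn1 : (1 : ℝ) ≤ f n := by
    rw [hf]
    by_cases h : p n = 0 ∨ p n = 1
    · simp [h]
    · simp only [h, if_false]
      push_neg at h
      have h0 : 0 < p n := lt_of_le_of_ne (hp n).1 (Ne.symm h.1)
      have h2 : 1 / p n ≥ 1 := by
        rw [ge_iff_le, le_div_iff₀ h0]; linarith [(hp n).2]
      exact le_max_of_le_left h2
  have hξ1 : (1 : ℝ) ≤ ξ := le_trans hfn1 hξn
  have hεξ : ε ≤ ε * ξ := by nlinarith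
  refine ⟨?_, ?_, ?_⟩
  · intro h0
    have := key1
    rw [h0] at this
    linarith
  · intro hl hu
    have hcond : ¬ (p n = 0 ∨ p n = 1) := by push_neg; exact ⟨ne_of_gt hl, ne_of_lt hu⟩
    have hfval : f n = max (1 / p n) (1 / (1 - p n)) := by rw [hf]; simp [hcond]
    have h1p : 0 < 1 - p n := by linarith
    have hub : g1 - g0 ≤ ε * ξ := by
      have h1 : g1 - g0 ≤ ε / (1 - p n) := by
        rw [le_div_iff₀ h1p]; linarith [key1]
      have h2 : ε / (1 - p n) = ε * (1 / (1 - p n)) := by ring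
      have h3 : 1 / (1 - p n) ≤ ξ := le_trans (le_trans (le_max_right _ _) hfval.ge) hξn
      nlinarith
    have hlb : -(ε * ξ) ≤ g1 - g0 := by
      have h1 : -(g1 - g0) ≤ ε / p n := by
        rw [le_div_iff₀ hl]; nlinarith [key0]
      have h3 : 1 / p n ≤ ξ := le_trans (le_trans (le_max_left _ _) hfval.ge) hξn
      have : ε / p n ≤ ε * ξ := by
        rw [show ε / p n = ε * (1 / p n) by ring]
        exact mul_le_mul_of_nonneg_left h3 hε
      linarith
    exact abs_le.mpr ⟨hlb, hub⟩
  · intro h1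
    have := key0
    rw [h1] at this
    linarith
end
end

section
/- If p ∈ [0,1]^N is an ε-equilibrium in the one-step game Γ_v and p^n ∈ (0,1) for some player n, then γ_v^n((p^{-n},1)) − γ_v^n((p^{-n},0)) ∈ [−ε/p^n, ε/(1−p^n)]. -/
open Finset

noncomputable section

lemma rho_update {N : ℕ} (p : Fin N → ℝ) (n : Fin N) (q : ℝ) (S : Finset (Fin N)) :
    (q * (∏ i ∈ S, Function.update p n (1:ℝ) i) * ∏ j ∈ Sᶜ, (1 - Function.update p n 1 j))
      + ((1-q) * (∏ i ∈ S, Function.update p n (0:ℝ) i) * ∏ j ∈ Sᶜ, (1 - Function.update p n 0 j))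
    = (∏ i ∈ S, Function.update p n q i) * ∏ j ∈ Sᶜ, (1 - Function.update p n q j) := by
  by_cases hn : n ∈ S
  · have h1 : ∀ c : ℝ, ∏ i ∈ S, Function.update p n c i = c * ∏ i ∈ S.erase n, p i := by
      intro c
      rw [← Finset.prod_erase_mul _ _ hn, Function.update_self, mul_comm]
      congr 1
      exact Finset.prod_congr rfl fun i hi => Function.update_of_ne (Finset.ne_of_mem_erase hi) _ _
    have h2 : ∀ c : ℝ, ∏ j ∈ Sᶜ, (1 - Function.update p n c j) = ∏ j ∈ Sᶜ, (1 - p j) := by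
      intro c
      refine Finset.prod_congr rfl fun j hj => ?_
      rw [Function.update_of_ne (by rintro rfl; exact (Finset.mem_compl.mp hj) hn) _ _]
    simp only [h1, h2]; ring
  · have hn' : n ∈ Sᶜ := Finset.mem_compl.mpr hn
    have h1 : ∀ c : ℝ, ∏ i ∈ S, Function.update p n c i = ∏ i ∈ S, p i := by
      intro c
      exact Finset.prod_congr rfl fun i hi => Function.update_of_ne (by rintro rfl; exact hn hi) _ _
    have h2 : ∀ c : ℝ, ∏ j ∈ Sᶜ, (1 - Function.update p n c j)
        = (1 - c) * ∏ j ∈ Sᶜ.erase n, (1 - p j) := by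
      intro c
      rw [← Finset.prod_erase_mul _ _ hn', Function.update_self, mul_comm]
      congr 1
      exact Finset.prod_congr rfl fun j hj => by
        rw [Function.update_of_ne (Finset.ne_of_mem_erase hj)]
    simp only [h1, h2]; ring

lemma gamma_update {N : ℕ} (v : Fin N → ℝ) (r : Finset (Fin N) → Fin N → ℝ)
    (p : Fin N → ℝ) (n : Fin N) (q : ℝ) :
    gamma v r (Function.update p n q) n
      = q * gamma v r (Function.update p n 1) n + (1-q) * gamma v r (Function.update p n 0) n := by
  simp only [gamma, rho]
  have hS : ∀ S ∈ univ.filter (fun S => S ≠ (∅ : Finset (Fin N))),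
      ((∏ i ∈ S, Function.update p n q i) * ∏ j ∈ Sᶜ, (1 - Function.update p n q j)) * r S n
      = q * (((∏ i ∈ S, Function.update p n (1:ℝ) i) * ∏ j ∈ Sᶜ, (1 - Function.update p n 1 j)) * r S n)
        + (1-q) * (((∏ i ∈ S, Function.update p n (0:ℝ) i) * ∏ j ∈ Sᶜ, (1 - Function.update p n 0 j)) * r S n) := by
    intro S _
    rw [← rho_update p n q S]; ring
  rw [Finset.sum_congr rfl hS, Finset.sum_add_distrib, ← Finset.mul_sum, ← Finset.mul_sum,
    ← rho_update p n q ∅]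
  ring
theorem equilibrium_interior_bounds (N : ℕ) (v : Fin N → ℝ)
    (r : Finset (Fin N) → Fin N → ℝ) (ε : ℝ) (hε : 0 ≤ ε)
    (p : Fin N → ℝ) (hp : ∀ i, 0 ≤ p i ∧ p i ≤ 1)
    (heq : IsEquilibrium v r ε p) (n : Fin N) (h0 : 0 < p n) (h1 : p n < 1) :
    -(ε / p n) ≤ gamma v r (Function.update p n 1) n - gamma v r (Function.update p n 0) n ∧
    gamma v r (Function.update p n 1) n - gamma v r (Function.update p n 0) n
      ≤ ε / (1 - p n) := by
  have key : ∀ q : ℝ, gamma v r (Function.update p n q) n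
      = q * gamma v r (Function.update p n 1) n + (1-q) * gamma v r (Function.update p n 0) n :=
    fun q => gamma_update v r p n q
  have hself : gamma v r p n
      = p n * gamma v r (Function.update p n 1) n + (1 - p n) * gamma v r (Function.update p n 0) n := by
    rw [← key (p n), Function.update_eq_self]
  have hA := heq n 1 (by norm_num) (by norm_num)
  have hB := heq n 0 (by norm_num) (by norm_num)
  rw [key 1, hself] at hA
  rw [key 0, hself] at hB
  set A := gamma v r (Function.update p n 1) n
  set B := gamma v r (Function.update p n 0) n
  constructor
  · rw [neg_le, ← neg_sub, le_div_iff₀ h0]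
    nlinarith
  · rw [le_div_iff₀ (by linarith : (0:ℝ) < 1 - p n)]
    nlinarith
end
end

section
/- Let p ∈ [0,1]^N, λ ∈ [0,1], m a player, and p̂ := (p^{-m}, (1−λ)p^m + λ). Then ‖γ_v(p̂) − γ_v(p)‖_∞ ≤ λ·(r_max + δ_v), where r_max := max_{n,∅≠S} |r_S^n| and δ_v := max(max_n |v^n|, r_max). -/
open Finset

noncomputable section

lemma one_sub_update {N : ℕ} (p : Fin N → ℝ) (m : Fin N) (x : ℝ) :
    (fun j => 1 - Function.update p m x j) = Function.update (fun j => 1 - p j) m (1 - x) := by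
  funext j
  by_cases h : j = m
  · subst h; simp
  · simp [Function.update_of_ne h]

lemma rho_update_affine {N : ℕ} (p : Fin N → ℝ) (m : Fin N) (x : ℝ) (S : Finset (Fin N)) :
    rho (Function.update p m x) S
      = (1 - x) * rho (Function.update p m 0) S + x * rho (Function.update p m 1) S := by
  unfold rho
  by_cases hm : m ∈ S
  · have hmc : m ∉ Sᶜ := by simpa using hm
    have h2 : ∀ y : ℝ, ∏ j ∈ Sᶜ, (1 - Function.update p m y j) = ∏ j ∈ Sᶜ, (1 - p j) := by
      intro y
      refine Finset.prod_congr rfl fun j hj => ?_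
      rw [Function.update_of_ne (by rintro rfl; exact hmc hj)]
    rw [h2, h2, h2, Finset.prod_update_of_mem hm, Finset.prod_update_of_mem hm,
      Finset.prod_update_of_mem hm]
    ring
  · have hmc : m ∈ Sᶜ := by simpa using hm
    have h1 : ∀ y : ℝ, ∏ i ∈ S, Function.update p m y i = ∏ i ∈ S, p i := by
      intro y
      refine Finset.prod_congr rfl fun i hi => ?_
      rw [Function.update_of_ne (by rintro rfl; exact hm hi)]
    have h2 : ∀ y : ℝ, ∏ j ∈ Sᶜ, (1 - Function.update p m y j)
        = (1 - y) * ∏ j ∈ Sᶜ \ {m}, (1 - p j) := by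
      intro y
      have := one_sub_update p m y
      calc ∏ j ∈ Sᶜ, (1 - Function.update p m y j)
          = ∏ j ∈ Sᶜ, Function.update (fun j => 1 - p j) m (1 - y) j := by rw [← this]
        _ = (1 - y) * ∏ j ∈ Sᶜ \ {m}, (1 - p j) := by rw [Finset.prod_update_of_mem hmc]
    rw [h1, h1, h1, h2, h2, h2]
    ring

lemma gamma_update_affine {N : ℕ} (v : Fin N → ℝ) (r : Finset (Fin N) → Fin N → ℝ)
    (p : Fin N → ℝ) (m : Fin N) (x : ℝ) (n : Fin N) :
    gamma v r (Function.update p m x) n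
      = (1 - x) * gamma v r (Function.update p m 0) n
        + x * gamma v r (Function.update p m 1) n := by
  unfold gamma
  have hs : ∀ S : Finset (Fin N), rho (Function.update p m x) S * r S n
      = (1 - x) * (rho (Function.update p m 0) S * r S n)
        + x * (rho (Function.update p m 1) S * r S n) := by
    intro S; rw [rho_update_affine]; ring
  simp only [hs, Finset.sum_add_distrib, ← Finset.mul_sum, rho_update_affine p m x ∅]
  ring

lemma rho_nonneg {N : ℕ} (q : Fin N → ℝ) (hq : ∀ i, 0 ≤ q i ∧ q i ≤ 1) (S : Finset (Fin N)) :
    0 ≤ rho q S :=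
  mul_nonneg (Finset.prod_nonneg fun i _ => (hq i).1)
    (Finset.prod_nonneg fun j _ => by linarith [(hq j).2])

lemma rho_sum_one {N : ℕ} (q : Fin N → ℝ) : ∑ S : Finset (Fin N), rho q S = 1 := by
  have h := Finset.prod_add q (fun i => 1 - q i) Finset.univ
  simp only [Finset.powerset_univ] at h
  have h1 : ∏ i ∈ Finset.univ, (q i + (1 - q i)) = (1 : ℝ) := by
    rw [Finset.prod_congr rfl (fun i _ => by ring : ∀ i ∈ Finset.univ, q i + (1 - q i) = (1:ℝ))]
    exact Finset.prod_const_one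
  rw [h1] at h
  calc ∑ S : Finset (Fin N), rho q S
      = ∑ S : Finset (Fin N), (∏ i ∈ S, q i) * ∏ i ∈ Finset.univ \ S, (1 - q i) :=
        Finset.sum_congr rfl fun S _ => by rw [rho, Finset.compl_eq_univ_sdiff]
    _ = 1 := h.symm

lemma rho_split {N : ℕ} (q : Fin N → ℝ) :
    rho q ∅ + ∑ S ∈ univ.filter (fun S => S ≠ (∅ : Finset (Fin N))), rho q S = 1 := by
  have h := Finset.sum_filter_add_sum_filter_not Finset.univ
    (fun S : Finset (Fin N) => S ≠ ∅) (rho q)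
  have h2 : (Finset.univ.filter (fun S : Finset (Fin N) => ¬ S ≠ ∅)) = {∅} := by
    ext S; simp
  rw [h2, Finset.sum_singleton] at h
  rw [← rho_sum_one q, ← h]; ring

lemma gamma_abs_le {N : ℕ} (v : Fin N → ℝ) (r : Finset (Fin N) → Fin N → ℝ)
    (vmax rmax : ℝ)
    (hv : ∀ n : Fin N, |v n| ≤ vmax)
    (hr : ∀ (n : Fin N) (S : Finset (Fin N)), S ≠ ∅ → |r S n| ≤ rmax)
    (q : Fin N → ℝ) (hq : ∀ i, 0 ≤ q i ∧ q i ≤ 1) (n : Fin N) :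
    |gamma v r q n| ≤ rho q ∅ * vmax + (1 - rho q ∅) * rmax := by
  have hsplit := rho_split q
  have key : |gamma v r q n|
      ≤ rho q ∅ * vmax + ∑ S ∈ univ.filter (fun S => S ≠ (∅ : Finset (Fin N))), rho q S * rmax := by
    unfold gamma
    calc |rho q ∅ * v n + ∑ S ∈ univ.filter (fun S => S ≠ (∅ : Finset (Fin N))), rho q S * r S n|
        ≤ |rho q ∅ * v n| + |∑ S ∈ univ.filter (fun S => S ≠ (∅ : Finset (Fin N))), rho q S * r S n| :=
          abs_add_le _ _
      _ ≤ rho q ∅ * vmax + ∑ S ∈ univ.filter (fun S => S ≠ (∅ : Finset (Fin N))), rho q S * rmax := by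
          gcongr ?_ + ?_
          · rw [abs_mul, abs_of_nonneg (rho_nonneg q hq ∅)]
            exact mul_le_mul_of_nonneg_left (hv n) (rho_nonneg q hq ∅)
          · refine (Finset.abs_sum_le_sum_abs _ _).trans ?_
            refine Finset.sum_le_sum fun S hS => ?_
            rw [abs_mul, abs_of_nonneg (rho_nonneg q hq S)]
            exact mul_le_mul_of_nonneg_left
              (hr n S (by simpa using hS)) (rho_nonneg q hq S)
  calc |gamma v r q n| ≤ _ := key
    _ = rho q ∅ * vmax + (1 - rho q ∅) * rmax := by
        rw [← Finset.sum_mul]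
        congr 1
        congr 1
        linarith [hsplit]

theorem gamma_hat_dist (N : ℕ) (hN : 0 < N) (v : Fin N → ℝ)
    (r : Finset (Fin N) → Fin N → ℝ) (vmax rmax : ℝ)
    (hv : IsGreatest {x : ℝ | ∃ n : Fin N, x = |v n|} vmax)
    (hr : IsGreatest {x : ℝ | ∃ (n : Fin N) (S : Finset (Fin N)),
            S ≠ ∅ ∧ x = |r S n|} rmax)
    (p : Fin N → ℝ) (hp : ∀ i, 0 ≤ p i ∧ p i ≤ 1)
    (lam : ℝ) (hlam : 0 ≤ lam ∧ lam ≤ 1) (m : Fin N) (n : Fin N) :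
    |gamma v r (Function.update p m ((1 - lam) * p m + lam)) n - gamma v r p n|
      ≤ lam * (rmax + max vmax rmax) := by
  obtain ⟨n0, hn0⟩ := hv.1
  obtain ⟨n1, S1, hS1, hrm⟩ := hr.1
  have hvub : ∀ k : Fin N, |v k| ≤ vmax := fun k => hv.2 ⟨k, rfl⟩
  have hrub : ∀ (k : Fin N) (S : Finset (Fin N)), S ≠ ∅ → |r S k| ≤ rmax :=
    fun k S hS => hr.2 ⟨k, S, hS, rfl⟩
  have hrm0 : 0 ≤ rmax := hrm ▸ abs_nonneg _
  have hvm0 : 0 ≤ vmax := hn0 ▸ abs_nonneg _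
  set g0 := gamma v r (Function.update p m 0) n with hg0
  set g1 := gamma v r (Function.update p m 1) n with hg1
  -- bounds on g0, g1
  have hq0 : ∀ i, 0 ≤ Function.update p m (0:ℝ) i ∧ Function.update p m (0:ℝ) i ≤ 1 := by
    intro i; by_cases h : i = m
    · subst h; simp
    · simp [Function.update_of_ne h, hp i]
  have hq1 : ∀ i, 0 ≤ Function.update p m (1:ℝ) i ∧ Function.update p m (1:ℝ) i ≤ 1 := by
    intro i; by_cases h : i = m
    · subst h; simp
    · simp [Function.update_of_ne h, hp i]
  have hrho0 : rho (Function.update p m (1:ℝ)) ∅ = 0 := by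
    unfold rho
    rw [Finset.prod_empty, one_mul]
    refine Finset.prod_eq_zero (Finset.mem_compl.mpr (by simp) : m ∈ (∅:Finset (Fin N))ᶜ) ?_
    simp
  have hbound1 : |g1| ≤ rmax := by
    have := gamma_abs_le v r vmax rmax hvub hrub _ hq1 n
    rw [hrho0] at this
    simpa using this
  have hbound0 : |g0| ≤ max vmax rmax := by
    have h := gamma_abs_le v r vmax rmax hvub hrub _ hq0 n
    have hnn := rho_nonneg _ hq0 (∅ : Finset (Fin N))
    have hle1 : rho (Function.update p m (0:ℝ)) ∅ ≤ 1 := by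
      unfold rho
      rw [Finset.prod_empty, one_mul]
      refine Finset.prod_le_one (fun j _ => by linarith [(hq0 j).2]) (fun j _ => by linarith [(hq0 j).1])
    refine h.trans ?_
    have hv' : vmax ≤ max vmax rmax := le_max_left _ _
    have hr' : rmax ≤ max vmax rmax := le_max_right _ _
    nlinarith
  have hpm := hp m
  have h1 : gamma v r (Function.update p m ((1 - lam) * p m + lam)) n
      = (1 - ((1 - lam) * p m + lam)) * g0 + ((1 - lam) * p m + lam) * g1 :=
    gamma_update_affine v r p m _ n
  have h2 : gamma v r p n = (1 - p m) * g0 + p m * g1 := by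
    nth_rewrite 1 [← Function.update_eq_self m p]
    exact gamma_update_affine v r p m _ n
  have hdiff : gamma v r (Function.update p m ((1 - lam) * p m + lam)) n - gamma v r p n
      = lam * (1 - p m) * (g1 - g0) := by
    rw [h1, h2]; ring
  rw [hdiff, abs_mul, abs_of_nonneg (mul_nonneg hlam.1 (by linarith [hpm.2]))]
  have habs : |g1 - g0| ≤ rmax + max vmax rmax :=
    (abs_sub g1 g0).trans (add_le_add hbound1 hbound0)
  calc lam * (1 - p m) * |g1 - g0| ≤ lam * 1 * |g1 - g0| := by
        apply mul_le_mul_of_nonneg_right _ (abs_nonneg _)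
        apply mul_le_mul_of_nonneg_left _ hlam.1
        linarith [hpm.1]
    _ = lam * |g1 - g0| := by ring
    _ ≤ lam * (rmax + max vmax rmax) := mul_le_mul_of_nonneg_left habs hlam.1
end
end
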